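/- arXiv:2409.05308 — 2 statements merged into one kernel-verified Lean document; each statement's English description precedes it below -/
import Mathlib

section
/- Let K ⊆ ℝⁿ be a convex set and let C₁, C₂ ⊆ K be closed convex sets such that (boundary of C₁) ∩ (boundary of C₂) ⊆ boundary of K. Suppose K, C₁, C₂ are full-dimensional (have nonempty interior), and suppose C₁ and C₂ are not weakly separable (i.e., there is no hyperplane H_{a,b} = {x : ⟨a,x⟩ = b}, a ≠ 0, with C₁ ⊆ {x : ⟨a,x⟩ ≤ b} and C₂ ⊆ {x : ⟨a,x⟩ ≥ b}). Then C₁ ∪ C₂ is convex. -/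
open scoped RealInnerProductSpace

open Set Topology Convex Pointwise

/-!
If the interiors of `C₁` and `C₂` were disjoint, a hyperplane would weakly separate the two sets,
so they share an interior point `w`; measure both sets by their gauges centred at `w`.
Suppose a point `z` of the segment from `x ∈ C₁` to `y ∈ C₂` lies outside `C₁ ∪ C₂`. Then no point
of the segment lies in `C₁ ∩ C₂` (it would put `z` on a subsegment inside `C₁` or inside `C₂`),
so by the intermediate value theorem the two gauges agree at some `u` of the segment, with a
common value `γ > 1`. The point at parameter `1 / γ` on the ray from `w` through `u` then lies on
both frontiers, yet it lies in the open segment from `w ∈ interior K` to `u ∈ K`, hence in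
`interior K`, contradicting `frontier C₁ ∩ frontier C₂ ⊆ frontier K`.
-/

section Segment

variable {𝕜 E : Type*} [Field 𝕜] [LinearOrder 𝕜] [IsStrictOrderedRing 𝕜]
  [AddCommGroup E] [Module 𝕜 E]

lemma mem_segment_or_mem_segment_of_mem_segment {x y z u : E} (hz : z ∈ [x -[𝕜] y])
    (hu : u ∈ [x -[𝕜] y]) : z ∈ [x -[𝕜] u] ∨ z ∈ [u -[𝕜] y] := by
  simp only [mem_segment_iff_wbtw] at *
  rcases eq_or_ne y x with rfl | hxy
  · rw [(wbtw_self_iff 𝕜).1 hz]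
    exact Or.inl (wbtw_self_left _ _ _)
  refine (wbtw_total_of_sameRay_vsub_left ?_).imp id hz.trans_left_right
  exact hz.sameRay_vsub_left.trans hu.sameRay_vsub_left.symm
    fun h => absurd (vsub_eq_zero_iff_eq.1 h) hxy

lemma disjoint_segment_inter_of_notMem_union {C₁ C₂ : Set E} (h1 : Convex 𝕜 C₁)
    (h2 : Convex 𝕜 C₂) {x y z : E} (hx : x ∈ C₁) (hy : y ∈ C₂) (hz : z ∈ [x -[𝕜] y])
    (hz12 : z ∉ C₁ ∪ C₂) : Disjoint [x -[𝕜] y] (C₁ ∩ C₂) := by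
  rw [disjoint_left]
  rintro u hu ⟨hu1, hu2⟩
  rcases mem_segment_or_mem_segment_of_mem_segment hz hu with h | h
  · exact hz12 (Or.inl (h1.segment_subset hx hu1 h))
  · exact hz12 (Or.inr (h2.segment_subset hu2 hy h))

end Segment

lemma neg_vadd_mem_nhds_zero {G : Type*} [AddGroup G] [TopologicalSpace G]
    [ContinuousConstVAdd G G] {C : Set G} {w : G} (hw : w ∈ interior C) :
    -w +ᵥ C ∈ 𝓝 (0 : G) := by
  rw [← mem_interior_iff_mem_nhds, interior_vadd, mem_vadd_set_iff_neg_vadd_mem]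
  simpa using hw

section CenteredGauge

variable {E : Type*} [NormedAddCommGroup E] [NormedSpace ℝ E] {C : Set E} {w : E}

noncomputable def centeredGauge (C : Set E) (w u : E) : ℝ :=
  gauge (-w +ᵥ C) (u - w)

lemma centeredGauge_le_one_iff (hC : Convex ℝ C) (hCc : IsClosed C) (hw : w ∈ interior C)
    (u : E) : centeredGauge C w u ≤ 1 ↔ u ∈ C := by
  rw [centeredGauge, gauge_le_one_iff_mem_closure (hC.vadd _) (neg_vadd_mem_nhds_zero hw),
    closure_vadd, hCc.closure_eq, mem_vadd_set_iff_neg_vadd_mem]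
  simp

lemma continuous_centeredGauge (hC : Convex ℝ C) (hw : w ∈ interior C) :
    Continuous (centeredGauge C w) :=
  (continuous_gauge (hC.vadd _) (neg_vadd_mem_nhds_zero hw)).comp (continuous_sub_right w)

lemma lineMap_inv_centeredGauge_mem_frontier (hC : Convex ℝ C) (hw : w ∈ interior C) {u : E}
    (hu : 0 < centeredGauge C w u) :
    AffineMap.lineMap w u (centeredGauge C w u)⁻¹ ∈ frontier C := by
  have h : (centeredGauge C w u)⁻¹ • (u - w) ∈ frontier (-w +ᵥ C) := by
    rw [← gauge_eq_one_iff_mem_frontier (hC.vadd (-w)) (neg_vadd_mem_nhds_zero hw),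
      gauge_smul_of_nonneg (inv_nonneg.2 hu.le), smul_eq_mul, ← centeredGauge,
      inv_mul_cancel₀ hu.ne']
  rw [frontier, closure_vadd, interior_vadd, ← vadd_set_sdiff, ← frontier,
    mem_vadd_set_iff_neg_vadd_mem, neg_neg, vadd_eq_add, add_comm] at h
  simpa [AffineMap.lineMap_apply] using h

end CenteredGauge

section Union

variable {E : Type*} [NormedAddCommGroup E] [NormedSpace ℝ E] {K C₁ C₂ : Set E}

lemma segment_subset_union_of_frontier_inter_subset (hK : Convex ℝ K) (h1K : C₁ ⊆ K)
    (h2K : C₂ ⊆ K) (h1c : IsClosed C₁) (h2c : IsClosed C₂) (h1 : Convex ℝ C₁)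
    (h2 : Convex ℝ C₂) (hbd : frontier C₁ ∩ frontier C₂ ⊆ frontier K) {w : E}
    (hw1 : w ∈ interior C₁) (hw2 : w ∈ interior C₂) {x y : E} (hx : x ∈ C₁) (hy : y ∈ C₂) :
    [x -[ℝ] y] ⊆ C₁ ∪ C₂ := by
  intro z hz
  by_contra hz12
  have hsep := disjoint_segment_inter_of_notMem_union h1 h2 hx hy hz hz12
  have hle₁ := centeredGauge_le_one_iff h1 h1c hw1
  have hle₂ := centeredGauge_le_one_iff h2 h2c hw2
  have hx₂ : x ∉ C₂ := fun h => hsep.notMem_of_mem_left (left_mem_segment ℝ x y) ⟨hx, h⟩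
  have hy₁ : y ∉ C₁ := fun h => hsep.notMem_of_mem_left (right_mem_segment ℝ x y) ⟨h, hy⟩
  obtain ⟨u, hu, hgu⟩ : ∃ u ∈ [x -[ℝ] y], centeredGauge C₁ w u = centeredGauge C₂ w u :=
    (convex_segment x y).isPreconnected.intermediate_value₂ (left_mem_segment ℝ x y)
      (right_mem_segment ℝ x y) (continuous_centeredGauge h1 hw1).continuousOn
      (continuous_centeredGauge h2 hw2).continuousOn
      (((hle₁ x).2 hx).trans (not_le.1 (hx₂ ∘ (hle₂ x).1)).le)
      (((hle₂ y).2 hy).trans (not_le.1 (hy₁ ∘ (hle₁ y).1)).le)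
  have hγ : 1 < centeredGauge C₁ w u :=
    not_le.1 fun h => hsep.notMem_of_mem_left hu ⟨(hle₁ u).1 h, (hle₂ u).1 (hgu ▸ h)⟩
  have hq₁ := lineMap_inv_centeredGauge_mem_frontier h1 hw1 (zero_lt_one.trans hγ)
  have hq₂ := lineMap_inv_centeredGauge_mem_frontier h2 hw2 (zero_lt_one.trans (hgu ▸ hγ))
  rw [← hgu] at hq₂
  have hqK : AffineMap.lineMap w u (centeredGauge C₁ w u)⁻¹ ∈ interior K :=
    hK.openSegment_interior_self_subset_interior (interior_mono h1K hw1)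
      (hK.segment_subset (h1K hx) (h2K hy) hu)
      (lineMap_mem_openSegment ℝ w u
        ⟨inv_pos.2 (zero_lt_one.trans hγ), inv_lt_one_of_one_lt₀ hγ⟩)
  exact (hbd ⟨hq₁, hq₂⟩).2 hqK

lemma convex_union_of_frontier_inter_subset (hK : Convex ℝ K) (h1K : C₁ ⊆ K)
    (h2K : C₂ ⊆ K) (h1c : IsClosed C₁) (h2c : IsClosed C₂) (h1 : Convex ℝ C₁)
    (h2 : Convex ℝ C₂) (hbd : frontier C₁ ∩ frontier C₂ ⊆ frontier K)
    (hw : (interior C₁ ∩ interior C₂).Nonempty) : Convex ℝ (C₁ ∪ C₂) := by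
  obtain ⟨w, hw1, hw2⟩ := hw
  rw [convex_iff_segment_subset]
  rintro x (hx | hx) y (hy | hy)
  · exact (h1.segment_subset hx hy).trans subset_union_left
  · exact segment_subset_union_of_frontier_inter_subset hK h1K h2K h1c h2c h1 h2 hbd
      hw1 hw2 hx hy
  · rw [segment_symm]
    exact segment_subset_union_of_frontier_inter_subset hK h1K h2K h1c h2c h1 h2 hbd
      hw1 hw2 hy hx
  · exact (h2.segment_subset hx hy).trans subset_union_right

end Union

lemma Convex.disjoint_interior_right_of_disjoint_interior {E : Type*} [NormedAddCommGroup E]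
    [NormedSpace ℝ E] {C₁ C₂ : Set E} (h2 : Convex ℝ C₂) (h2i : (interior C₂).Nonempty)
    (h : Disjoint (interior C₁) (interior C₂)) : Disjoint (interior C₁) C₂ := by
  rw [disjoint_left]
  intro p hp1 hp2
  obtain ⟨q, hq⟩ := h2i
  have hp : p ∈ closure (openSegment ℝ p q) := by
    rw [closure_openSegment]
    exact left_mem_segment ℝ p q
  obtain ⟨r, hr1, hr2⟩ := mem_closure_iff.1 hp _ isOpen_interior hp1
  exact disjoint_left.1 h hr1 (h2.openSegment_self_interior_subset_interior hp2 hq hr2)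

lemma interior_inter_nonempty_of_not_separated {E : Type*} [NormedAddCommGroup E]
    [InnerProductSpace ℝ E] [CompleteSpace E] {C₁ C₂ : Set E} (h1 : Convex ℝ C₁)
    (h2 : Convex ℝ C₂) (h1i : (interior C₁).Nonempty) (h2i : (interior C₂).Nonempty)
    (hnotsep : ¬ ∃ (a : E) (b : ℝ), a ≠ 0 ∧ (∀ x ∈ C₁, ⟪a, x⟫ ≤ b) ∧ ∀ x ∈ C₂, b ≤ ⟪a, x⟫) :
    (interior C₁ ∩ interior C₂).Nonempty := by
  rw [← not_disjoint_iff_nonempty_inter]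
  intro hdisj
  obtain ⟨f, u, hf, hf1, hf2⟩ := geometric_hahn_banach_of_nonempty_interior h1 h2
    (h2.disjoint_interior_right_of_disjoint_interior h2i hdisj) h1i (h2i.mono interior_subset)
  refine hnotsep ⟨(InnerProductSpace.toDual ℝ E).symm f, u, by simpa using hf, ?_, ?_⟩ <;>
    simpa [InnerProductSpace.toDual_symm_apply]

theorem stmt_2_general (n : ℕ) (K C₁ C₂ : Set (EuclideanSpace ℝ (Fin n)))
    (hK : Convex ℝ K) (h1K : C₁ ⊆ K) (h2K : C₂ ⊆ K)
    (h1c : IsClosed C₁) (h2c : IsClosed C₂)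
    (h1 : Convex ℝ C₁) (h2 : Convex ℝ C₂)
    (hbd : frontier C₁ ∩ frontier C₂ ⊆ frontier K)
    (h1full : (interior C₁).Nonempty)
    (h2full : (interior C₂).Nonempty)
    (hnotsep : ¬ ∃ (a : EuclideanSpace ℝ (Fin n)) (b : ℝ), a ≠ 0 ∧
      (∀ x ∈ C₁, ⟪a, x⟫ ≤ b) ∧ (∀ x ∈ C₂, b ≤ ⟪a, x⟫)) :
    Convex ℝ (C₁ ∪ C₂) :=
  convex_union_of_frontier_inter_subset hK h1K h2K h1c h2c h1 h2 hbd
    (interior_inter_nonempty_of_not_separated h1 h2 h1full h2full hnotsep)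

theorem stmt_2 (n : ℕ) (K C₁ C₂ : Set (EuclideanSpace ℝ (Fin n)))
    (hK : Convex ℝ K) (h1K : C₁ ⊆ K) (h2K : C₂ ⊆ K)
    (h1c : IsClosed C₁) (h2c : IsClosed C₂)
    (h1 : Convex ℝ C₁) (h2 : Convex ℝ C₂)
    (hbd : frontier C₁ ∩ frontier C₂ ⊆ frontier K)
    (hKfull : (interior K).Nonempty) (h1full : (interior C₁).Nonempty)
    (h2full : (interior C₂).Nonempty)
    (hnotsep : ¬ ∃ (a : EuclideanSpace ℝ (Fin n)) (b : ℝ), a ≠ 0 ∧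
      (∀ x ∈ C₁, ⟪a, x⟫ ≤ b) ∧ (∀ x ∈ C₂, b ≤ ⟪a, x⟫)) :
    Convex ℝ (C₁ ∪ C₂) :=
  stmt_2_general n K C₁ C₂ hK h1K h2K h1c h2c h1 h2 hbd h1full h2full hnotsep
end

section
/- Let C₁, C₂, …, C_m ⊆ K ⊆ ℝⁿ with K convex, each C_i closed convex and full-dimensional, K full-dimensional, and ∂C_i ∩ ∂C_j ⊆ ∂K for all 1 ≤ i < j ≤ m. Suppose for each i = 1, …, m−1 the pair (C₁ ∪ … ∪ C_i, C_{i+1}) is not weakly separable. Then the union ⋃_{i=1}^m C_i is convex. -/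
open scoped RealInnerProductSpace
open Set Pointwise

lemma gauge_char {E : Type*} [NormedAddCommGroup E] [NormedSpace ℝ E]
    (A : Set E) (hcl : IsClosed A) (hco : Convex ℝ A) {w : E} (hw : w ∈ interior A) :
    ∃ g : E → ℝ, Continuous g ∧ (∀ r : ℝ, 0 ≤ r → ∀ v, g (r • v) = r * g v) ∧
      (∀ u, u ∈ A ↔ g (u - w) ≤ 1) ∧ (∀ u, u ∈ interior A ↔ g (u - w) < 1) ∧
      (∀ u, g (u - w) = 1 → u ∈ frontier A) := by
  set A' : Set E := (-w) +ᵥ A with hA'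
  have hmem : ∀ u : E, u - w ∈ A' ↔ u ∈ A := by
    intro u
    rw [hA', Set.mem_vadd_set_iff_neg_vadd_mem]
    simp [vadd_eq_add]
  have hint : interior A' = (-w) +ᵥ interior A := by
    rw [hA']; exact interior_vadd _ _
  have hmemi : ∀ u : E, u - w ∈ interior A' ↔ u ∈ interior A := by
    intro u
    rw [hint, Set.mem_vadd_set_iff_neg_vadd_mem]
    simp [vadd_eq_add]
  have h0 : (0 : E) ∈ interior A' := by
    have := (hmemi w).mpr hw
    simpa using this
  have hnhds : A' ∈ nhds 0 := mem_interior_iff_mem_nhds.1 h0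
  have hco' : Convex ℝ A' := hco.vadd _
  have hcl' : IsClosed A' := by
    have := (Homeomorph.addLeft (-w)).isClosedMap A hcl
    simpa [hA', ← Set.image_vadd, vadd_eq_add] using this
  have h_le : ∀ u, u ∈ A ↔ gauge A' (u - w) ≤ 1 := by
    intro u
    constructor
    · intro h
      exact gauge_le_one_of_mem ((hmem u).mpr h)
    · intro h
      exact (hmem u).1 (hcl'.closure_eq ▸ (gauge_le_one_iff_mem_closure hco' hnhds).1 h)
  have h_lt : ∀ u, u ∈ interior A ↔ gauge A' (u - w) < 1 := by
    intro u
    rw [← hmemi u]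
    exact Iff.symm (gauge_lt_one_iff_mem_interior hco' hnhds)
  refine ⟨gauge A', continuous_gauge hco' hnhds,
    fun r hr v => gauge_smul_of_nonneg hr v, h_le, h_lt, fun u h => ?_⟩
  rw [hcl.frontier_eq]
  exact ⟨(h_le u).2 h.le, fun hi => absurd ((h_lt u).1 hi) (by rw [h]; exact lt_irrefl 1)⟩

theorem union_convex_two {n : ℕ} (K A B : Set (EuclideanSpace ℝ (Fin n)))
    (hK : Convex ℝ K) (hAK : A ⊆ K) (hBK : B ⊆ K)
    (hAcl : IsClosed A) (hBcl : IsClosed B) (hAco : Convex ℝ A) (hBco : Convex ℝ B)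
    (hAfull : (interior A).Nonempty) (hBfull : (interior B).Nonempty)
    (hbd : frontier A ∩ frontier B ⊆ frontier K)
    (hns : ¬ ∃ (a : EuclideanSpace ℝ (Fin n)) (b : ℝ), a ≠ 0 ∧
      (∀ x ∈ A, ⟪a, x⟫ ≤ b) ∧ (∀ x ∈ B, b ≤ ⟪a, x⟫)) :
    Convex ℝ (A ∪ B) := by
  by_cases hW : (interior A ∩ interior B).Nonempty
  · obtain ⟨w, hwA, hwB⟩ := hW
    -- the main geometric argument
    rw [convex_iff_segment_subset]
    have key : ∀ x ∈ A, ∀ y ∈ B, segment ℝ x y ⊆ A ∪ B := by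
      intro x hx y hy
      by_contra hseg
      obtain ⟨z, hzseg, hz⟩ := Set.not_subset.1 hseg
      rw [segment_eq_image_lineMap] at hzseg
      obtain ⟨t₀, ht₀, hzeq⟩ := hzseg
      set c : ℝ → EuclideanSpace ℝ (Fin n) := fun t => AffineMap.lineMap x y t with hc_def
      have hc : Continuous c := AffineMap.lineMap_continuous
      subst hzeq
      have hc0 : c 0 = x := AffineMap.lineMap_apply_zero x y
      have hc1 : c 1 = y := AffineMap.lineMap_apply_one x y
      have hseg' : ∀ t1 t2 : ℝ, ∀ t ∈ Set.Icc t1 t2, c t ∈ segment ℝ (c t1) (c t2) := by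
        intro t1 t2 t ht
        have h12 : t1 ≤ t2 := ht.1.trans ht.2
        have : c t ∈ (AffineMap.lineMap x y : ℝ →ᵃ[ℝ] _) '' (segment ℝ t1 t2) :=
          ⟨t, by rwa [segment_eq_Icc h12], rfl⟩
        rwa [image_segment] at this
      -- exit parameters on the segment [x,y]
      set SA : Set ℝ := Set.Icc 0 t₀ ∩ {t | c t ∈ A} with hSA_def
      set SB : Set ℝ := Set.Icc t₀ 1 ∩ {t | c t ∈ B} with hSB_def
      have hSA0 : (0 : ℝ) ∈ SA := ⟨⟨le_rfl, ht₀.1⟩, by rw [Set.mem_setOf_eq, hc0]; exact hx⟩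
      have hSB1 : (1 : ℝ) ∈ SB := ⟨⟨ht₀.2, le_rfl⟩, by rw [Set.mem_setOf_eq, hc1]; exact hy⟩
      have hSAcl : IsClosed SA := isClosed_Icc.inter (hAcl.preimage hc)
      have hSBcl : IsClosed SB := isClosed_Icc.inter (hBcl.preimage hc)
      have hSAbdd : BddAbove SA := ⟨t₀, fun t ht => ht.1.2⟩
      have hSBbdd : BddBelow SB := ⟨t₀, fun t ht => ht.1.1⟩
      set τ : ℝ := sSup SA with hτ_def
      set σ : ℝ := sInf SB with hσ_def
      have hτ : τ ∈ SA := hSAcl.csSup_mem ⟨0, hSA0⟩ hSAbdd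
      have hσ : σ ∈ SB := hSBcl.csInf_mem ⟨1, hSB1⟩ hSBbdd
      have hτA : c τ ∈ A := hτ.2
      have hσB : c σ ∈ B := hσ.2
      have hτlt : τ < t₀ := lt_of_le_of_ne hτ.1.2 (fun h => hz (Or.inl (h ▸ hτA)))
      have hσgt : t₀ < σ := lt_of_le_of_ne hσ.1.1 (fun h => hz (Or.inr (h ▸ hσB)))
      have hτσ : τ < σ := hτlt.trans hσgt
      have hτ0 : 0 ≤ τ := hτ.1.1
      have hσ1 : σ ≤ 1 := hσ.1.2
      have hnotA : ∀ t, τ < t → t ≤ σ → c t ∉ A := by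
        intro t h1 h2 hmemA
        rcases le_or_gt t t₀ with h | h
        · exact absurd (le_csSup hSAbdd ⟨⟨hτ0.trans h1.le, h⟩, hmemA⟩) (not_le.mpr h1)
        · refine hz (Or.inl (hAco.segment_subset (hc0 ▸ hx) hmemA
            (hseg' 0 t t₀ ⟨ht₀.1, h.le⟩)))
      have hnotB : ∀ t, τ ≤ t → t < σ → c t ∉ B := by
        intro t h1 h2 hmemB
        rcases le_or_gt t₀ t with h | h
        · exact absurd (csInf_le hSBbdd ⟨⟨h, h2.le.trans hσ1⟩, hmemB⟩) (not_le.mpr h2)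
        · refine hz (Or.inr (hBco.segment_subset hmemB (hc1 ▸ hy)
            (hseg' t 1 t₀ ⟨h.le, ht₀.2⟩)))
      have hpB : c τ ∉ B := hnotB τ le_rfl hτσ
      have hqA : c σ ∉ A := hnotA σ hτσ le_rfl
      -- gauges
      obtain ⟨gA, hgAc, hgAh, hgAle, hgAlt, hgAfr⟩ := gauge_char A hAcl hAco hwA
      obtain ⟨gB, hgBc, hgBh, hgBle, hgBlt, hgBfr⟩ := gauge_char B hBcl hBco hwB
      set φ : ℝ → ℝ := fun t => gA (c t - w) - gB (c t - w) with hφ_def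
      have hφc : Continuous φ :=
        (hgAc.comp (hc.sub continuous_const)).sub (hgBc.comp (hc.sub continuous_const))
      have hφτ : φ τ < 0 := by
        have h1 : gA (c τ - w) ≤ 1 := (hgAle _).1 hτA
        have h2 : 1 < gB (c τ - w) := not_le.mp (fun h => hpB ((hgBle _).2 h))
        simp only [hφ_def]; linarith
      have hφσ : 0 < φ σ := by
        have h1 : gB (c σ - w) ≤ 1 := (hgBle _).1 hσB
        have h2 : 1 < gA (c σ - w) := not_le.mp (fun h => hqA ((hgAle _).2 h))
        simp only [hφ_def]; linarith
      obtain ⟨s, hs, hφs⟩ := intermediate_value_Ioo hτσ.le hφc.continuousOn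
        (Set.mem_Ioo.mpr ⟨hφτ, hφσ⟩)
      set g : ℝ := gA (c s - w) with hg_def
      have heq : gB (c s - w) = g := by
        have : gA (c s - w) - gB (c s - w) = 0 := hφs
        linarith
      have hsA : c s ∉ A := hnotA s hs.1 hs.2.le
      have hg1 : 1 < g := not_le.mp (fun h => hsA ((hgAle _).2 h))
      have hg0 : 0 < g := lt_trans one_pos hg1
      set α : EuclideanSpace ℝ (Fin n) := w + g⁻¹ • (c s - w) with hα_def
      have hαsub : α - w = g⁻¹ • (c s - w) := by rw [hα_def]; abel
      have hαA : gA (α - w) = 1 := by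
        rw [hαsub, hgAh g⁻¹ (by positivity) _, ← hg_def, inv_mul_cancel₀ hg0.ne']
      have hαB : gB (α - w) = 1 := by
        rw [hαsub, hgBh g⁻¹ (by positivity) _, heq, inv_mul_cancel₀ hg0.ne']
      have hαK : α ∈ frontier K := hbd ⟨hgAfr _ hαA, hgBfr _ hαB⟩
      -- but α is in the interior of K
      have hwK : w ∈ interior K := interior_mono hAK hwA
      have hcsK : c s ∈ K := hK.segment_subset (hAK hx) (hBK hy)
        (by rw [← hc0, ← hc1]; exact hseg' 0 1 s ⟨hτ0.trans hs.1.le, hs.2.le.trans hσ1⟩)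
      have hαint : α ∈ interior K := by
        have h2 : (1 - g⁻¹) • w + g⁻¹ • (c s) ∈ interior K :=
          hK.combo_interior_self_mem_interior hwK hcsK
            (by have : g⁻¹ < 1 := inv_lt_one_of_one_lt₀ hg1; linarith)
            (by positivity) (by ring)
        have h3 : α = (1 - g⁻¹) • w + g⁻¹ • (c s) := by
          rw [hα_def]; module
        rwa [h3]
      exact hαK.2 hαint
    intro x hx y hy
    rcases hx with hx | hx <;> rcases hy with hy | hy
    · exact (hAco.segment_subset hx hy).trans Set.subset_union_left
    · exact key x hx y hy
    · rw [segment_symm]; exact key y hy x hx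
    · exact (hBco.segment_subset hx hy).trans Set.subset_union_right
  · -- interiors disjoint: separate, contradicting hns
    exfalso
    apply hns
    obtain ⟨wA, hwA⟩ := hAfull
    obtain ⟨wB, hwB⟩ := hBfull
    have hdisj : Disjoint (interior A) (interior B) := by
      rw [Set.disjoint_iff_inter_eq_empty]
      exact Set.not_nonempty_iff_eq_empty.1 hW
    obtain ⟨f, u, hfu1, hfu2⟩ := geometric_hahn_banach_open hAco.interior isOpen_interior
      hBco.interior hdisj
    have hA_le : ∀ x ∈ A, f x ≤ u := by
      intro x hxA
      have hten : Filter.Tendsto (fun t : ℝ => f ((1 - t) • wA + t • x))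
          (nhdsWithin 1 (Set.Iio 1)) (nhds (f x)) := by
        have hcont : Continuous fun t : ℝ => f ((1 - t) • wA + t • x) :=
          f.continuous.comp (((continuous_const.sub continuous_id).smul
            continuous_const).add (continuous_id.smul continuous_const))
        have := hcont.tendsto 1
        simp only [sub_self, zero_smul, one_smul, zero_add] at this
        exact this.mono_left nhdsWithin_le_nhds
      refine le_of_tendsto hten ?_
      filter_upwards [Ioo_mem_nhdsLT_of_mem (Set.mem_Ioc.mpr ⟨zero_lt_one, le_rfl⟩)] with t ht
      exact (hfu1 _ (hAco.combo_interior_self_mem_interior hwA hxA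
        (by linarith [ht.2]) ht.1.le (by ring))).le
    have hB_ge : ∀ x ∈ B, u ≤ f x := by
      intro x hxB
      have hten : Filter.Tendsto (fun t : ℝ => f ((1 - t) • wB + t • x))
          (nhdsWithin 1 (Set.Iio 1)) (nhds (f x)) := by
        have hcont : Continuous fun t : ℝ => f ((1 - t) • wB + t • x) :=
          f.continuous.comp (((continuous_const.sub continuous_id).smul
            continuous_const).add (continuous_id.smul continuous_const))
        have := hcont.tendsto 1
        simp only [sub_self, zero_smul, one_smul, zero_add] at this
        exact this.mono_left nhdsWithin_le_nhds
      refine ge_of_tendsto hten ?_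
      filter_upwards [Ioo_mem_nhdsLT_of_mem (Set.mem_Ioc.mpr ⟨zero_lt_one, le_rfl⟩)] with t ht
      exact hfu2 _ (hBco.combo_interior_self_mem_interior hwB hxB
        (by linarith [ht.2]) ht.1.le (by ring))
    set a : EuclideanSpace ℝ (Fin n) := (InnerProductSpace.toDual ℝ _).symm f with ha_def
    have hinner : ∀ x, ⟪a, x⟫ = f x := fun x => InnerProductSpace.toDual_symm_apply
    refine ⟨a, u, ?_, fun x hx => (hinner x) ▸ hA_le x hx, fun x hx => (hinner x) ▸ hB_ge x hx⟩
    intro h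
    have h1 := hfu1 wA hwA
    have h2 := hfu2 wB hwB
    have e1 : f wA = 0 := by rw [← hinner, h, inner_zero_left]
    have e2 : f wB = 0 := by rw [← hinner, h, inner_zero_left]
    rw [e1] at h1; rw [e2] at h2
    linarith

theorem stmt_14 (n m : ℕ) (hm : 1 ≤ m) (K : Set (EuclideanSpace ℝ (Fin n)))
    (C : ℕ → Set (EuclideanSpace ℝ (Fin n)))
    (hK : Convex ℝ K) (hKfull : (interior K).Nonempty)
    (hsub : ∀ i < m, C i ⊆ K)
    (hcl : ∀ i < m, IsClosed (C i))
    (hconv : ∀ i < m, Convex ℝ (C i))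
    (hfull : ∀ i < m, (interior (C i)).Nonempty)
    (hbd : ∀ i j, i < j → j < m → frontier (C i) ∩ frontier (C j) ⊆ frontier K)
    (hnotsep : ∀ i, i + 1 < m →
      ¬ ∃ (a : EuclideanSpace ℝ (Fin n)) (b : ℝ), a ≠ 0 ∧
        (∀ x ∈ ⋃ s ∈ Finset.range (i + 1), C s, ⟪a, x⟫ ≤ b) ∧
        (∀ x ∈ C (i + 1), b ≤ ⟪a, x⟫)) :
    Convex ℝ (⋃ i ∈ Finset.range m, C i) := by
  set U : ℕ → Set (EuclideanSpace ℝ (Fin n)) := fun i => ⋃ s ∈ Finset.range (i + 1), C s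
    with hU_def
  have hUsucc : ∀ i, U (i + 1) = U i ∪ C (i + 1) := by
    intro i
    rw [hU_def]
    simp only [Finset.range_add_one (n := i + 1), Finset.set_biUnion_insert]
    rw [Set.union_comm]
  have hUsub : ∀ i, i < m → U i ⊆ K := by
    intro i hi
    refine Set.iUnion₂_subset fun s hs => hsub s ?_
    have := Finset.mem_range.1 hs
    omega
  have hUcl : ∀ i, i < m → IsClosed (U i) := by
    intro i hi
    refine Set.Finite.isClosed_biUnion (Finset.finite_toSet _) fun s hs => hcl s ?_
    have := Finset.mem_range.1 hs
    omega
  have hC0sub : ∀ i, C 0 ⊆ U i := fun i =>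
    Set.subset_biUnion_of_mem (Finset.mem_range.2 (Nat.succ_pos i))
  have hUfull : ∀ i, (interior (U i)).Nonempty := by
    intro i
    obtain ⟨v, hv⟩ := hfull 0 hm
    exact ⟨v, interior_mono (hC0sub i) hv⟩
  have hUfr : ∀ i, frontier (U i) ⊆ ⋃ s ∈ Finset.range (i + 1), frontier (C s) := by
    intro i
    induction i with
    | zero => simp [hU_def]
    | succ i ih =>
      rw [hUsucc i]
      refine (frontier_union_subset _ _).trans ?_
      refine Set.union_subset ((Set.inter_subset_left.trans ih).trans ?_)
        (Set.inter_subset_right.trans ?_)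
      · intro x hx
        simp only [Set.mem_iUnion, exists_prop, Finset.mem_range] at hx ⊢
        obtain ⟨s, hs, h⟩ := hx
        exact ⟨s, by omega, h⟩
      · intro x hx
        exact Set.mem_biUnion (Finset.self_mem_range_succ (i + 1)) hx
  have main : ∀ i, i < m → Convex ℝ (U i) := by
    intro i
    induction i with
    | zero =>
      intro _
      have : U 0 = C 0 := by simp [hU_def]
      rw [this]
      exact hconv 0 hm
    | succ i ih =>
      intro hi
      have hi' : i < m := by omega
      rw [hUsucc i]
      refine union_convex_two K (U i) (C (i + 1)) hK (hUsub i hi') (hsub _ hi)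
        (hUcl i hi') (hcl _ hi) (ih hi') (hconv _ hi) (hUfull i) (hfull _ hi)
        ?_ (hnotsep i hi)
      intro z hz
      obtain ⟨h1, h2⟩ := hz
      obtain ⟨S, hS⟩ := Set.mem_iUnion.1 (hUfr i h1)
      simp only [Set.mem_iUnion, exists_prop] at hS
      obtain ⟨hSmem, hSfr⟩ := hS
      exact hbd S (i + 1) (Finset.mem_range.1 hSmem) hi ⟨hSfr, h2⟩
  obtain ⟨k, rfl⟩ : ∃ k, m = k + 1 := ⟨m - 1, by omega⟩
  exact main k (by omega)
end
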